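/- Lax-type reduction of the nonabelian Toda lattice: let γ be a complex scalar and let G_n : ℝ → (k×k complex matrices), indexed by n, be twice differentiable with G_n(t) invertible for all t, satisfying the nonabelian Toda equations G̈_n = Ġ_n G_n⁻¹ Ġ_n + γ { G_{n+1} − G_n G_{n−1}⁻¹ G_n }. Define A_n := G_n⁻¹ G_{n+1} and B_n := G_n⁻¹ Ġ_n. Then Ȧ_n = A_n B_{n+1} − B_n A_n and Ḃ_n = γ ( A_n − A_{n−1} ). -/

import Mathlib

/-!
Both `A n = (G n)⁻¹ * G (n + 1)` and `B n = (G n)⁻¹ * G' n` have the form `f⁻¹ * g`, whose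
derivative is `f⁻¹ * (g' - f' * f⁻¹ * g)`. For `A n` this is `(G n)⁻¹ * G' (n + 1) - B n * A n`,
and `(G n)⁻¹ * G' (n + 1) = A n * B (n + 1)`; for `B n` it is
`(G n)⁻¹ * (G'' n - G' n * (G n)⁻¹ * G' n)`, which the Toda equation turns into
`γ • (A n - A (n - 1))`.
-/

open Matrix

attribute [local instance] Matrix.normedAddCommGroup Matrix.normedSpace

open Filter Topology

section MatrixDeriv

/- The entrywise sup norm on matrices is not submultiplicative, so the product rule for normed
algebras does not apply; the product and inverse rules below go through difference quotients,
which only see the topology. -/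

variable {𝕜 R m : Type*} [NontriviallyNormedField 𝕜] [Fintype m]
  {f g : 𝕜 → Matrix m m R} {f' g' : Matrix m m R} {t : 𝕜}

section Mul

variable [NormedRing R] [NormedAlgebra 𝕜 R]

theorem slope_matrix_mul (f g : 𝕜 → Matrix m m R) (t s : 𝕜) :
    slope (fun s => f s * g s) t s = slope f t s * g s + f t * slope g t s := by
  simp only [slope_def_module, Matrix.smul_mul, Matrix.mul_smul, ← smul_add]
  congr 1
  noncomm_ring

theorem HasDerivAt.matrix_mul (hf : HasDerivAt f f' t) (hg : HasDerivAt g g' t) :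
    HasDerivAt (fun s => f s * g s) (f' * g t + f t * g') t := by
  have hf_slope : Tendsto (slope f t) (𝓝[≠] t) (𝓝 f') := hf.tendsto_slope
  have hg_slope : Tendsto (slope g t) (𝓝[≠] t) (𝓝 g') := hg.tendsto_slope
  have hg_cont : Tendsto g (𝓝[≠] t) (𝓝 (g t)) :=
    hg.continuousAt.tendsto.mono_left nhdsWithin_le_nhds
  have h : Tendsto (slope (fun s => f s * g s) t) (𝓝[≠] t) (𝓝 (f' * g t + f t * g')) :=
    ((hf_slope.mul hg_cont).add (tendsto_const_nhds.mul hg_slope)).congr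
      fun s => (slope_matrix_mul f g t s).symm
  exact hasDerivAt_iff_tendsto_slope.mpr h

end Mul

section Inv

variable [NormedField R] [NormedAlgebra 𝕜 R] [DecidableEq m]

theorem slope_matrix_inv {s : 𝕜} (hs : IsUnit (f s)) (ht : IsUnit (f t)) :
    slope (fun s => (f s)⁻¹) t s = -((f s)⁻¹ * slope f t s * (f t)⁻¹) := by
  simp only [slope_def_module, Matrix.smul_mul, Matrix.mul_smul, ← smul_neg,
    Matrix.inv_sub_inv (iff_of_true hs ht)]
  congr 1
  noncomm_ring

theorem HasDerivAt.matrix_inv (hf : HasDerivAt f f' t) (hu : IsUnit (f t)) :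
    HasDerivAt (fun s => (f s)⁻¹) (-((f t)⁻¹ * f' * (f t)⁻¹)) t := by
  have hf_slope : Tendsto (slope f t) (𝓝[≠] t) (𝓝 f') := hf.tendsto_slope
  have hf_cont : ContinuousAt f t := hf.continuousAt
  have hdet : (f t).det ≠ 0 := ((isUnit_iff_isUnit_det _).mp hu).ne_zero
  have hu_near : ∀ᶠ s in 𝓝[≠] t, IsUnit (f s) := by
    have hdet_cont : ContinuousAt (fun s => (f s).det) t :=
      continuous_id.matrix_det.continuousAt.comp hf_cont
    filter_upwards [(hdet_cont.eventually_ne hdet).filter_mono nhdsWithin_le_nhds] with s hs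
    exact (isUnit_iff_isUnit_det _).mpr hs.isUnit
  have hinv_cont : Tendsto (fun s => (f s)⁻¹) (𝓝[≠] t) (𝓝 (f t)⁻¹) := by
    have h : ContinuousAt Ring.inverse (f t).det := by
      rw [Ring.inverse_eq_inv']
      exact continuousAt_inv₀ hdet
    exact ((continuousAt_matrix_inv _ h).comp hf_cont).tendsto.mono_left nhdsWithin_le_nhds
  have h : Tendsto (slope (fun s => (f s)⁻¹) t) (𝓝[≠] t) (𝓝 (-((f t)⁻¹ * f' * (f t)⁻¹))) :=
    ((hinv_cont.mul hf_slope).mul tendsto_const_nhds).neg.congr'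
      (hu_near.mono fun s hs => (slope_matrix_inv hs hu).symm)
  exact hasDerivAt_iff_tendsto_slope.mpr h

theorem HasDerivAt.matrix_inv_mul (hf : HasDerivAt f f' t) (hu : IsUnit (f t))
    (hg : HasDerivAt g g' t) :
    HasDerivAt (fun s => (f s)⁻¹ * g s) ((f t)⁻¹ * (g' - f' * (f t)⁻¹ * g t)) t :=
  ((hf.matrix_inv hu).matrix_mul hg).congr_deriv (by noncomm_ring)

end Inv

end MatrixDeriv

theorem nonabelian_toda_lax_reduction (k : ℕ) (γ : ℂ)
    (G G' G'' : ℤ → ℝ → Matrix (Fin k) (Fin k) ℂ)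
    (hGinv : ∀ n t, IsUnit (G n t))
    (hG : ∀ n t, HasDerivAt (G n) (G' n t) t)
    (hG' : ∀ n t, HasDerivAt (G' n) (G'' n t) t)
    (hODE : ∀ n t, G'' n t = G' n t * (G n t)⁻¹ * G' n t
      + γ • (G (n + 1) t - G n t * (G (n - 1) t)⁻¹ * G n t))
    (A B : ℤ → ℝ → Matrix (Fin k) (Fin k) ℂ)
    (hA : ∀ n t, A n t = (G n t)⁻¹ * G (n + 1) t)
    (hB : ∀ n t, B n t = (G n t)⁻¹ * G' n t) :
    (∀ n t, HasDerivAt (A n) (A n t * B (n + 1) t - B n t * A n t) t) ∧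
    (∀ n t, HasDerivAt (B n) (γ • (A n t - A (n - 1) t)) t) := by
  have hdet : ∀ n t, IsUnit (G n t).det := fun n t => (isUnit_iff_isUnit_det _).mp (hGinv n t)
  obtain rfl : A = fun n s => (G n s)⁻¹ * G (n + 1) s := funext₂ hA
  obtain rfl : B = fun n s => (G n s)⁻¹ * G' n s := funext₂ hB
  refine ⟨fun n t => ((hG n t).matrix_inv_mul (hGinv n t) (hG (n + 1) t)).congr_deriv ?_,
    fun n t => ((hG n t).matrix_inv_mul (hGinv n t) (hG' n t)).congr_deriv ?_⟩
  · rw [mul_assoc (G n t)⁻¹, mul_nonsing_inv_cancel_left _ _ (hdet (n + 1) t)]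
    noncomm_ring
  · beta_reduce
    rw [hODE, sub_add_cancel, add_sub_cancel_left, Matrix.mul_smul, mul_sub, mul_assoc,
      nonsing_inv_mul_cancel_left _ _ (hdet n t)]
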